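/- Let V be a unitary corepresentation of a compact quantum group Q on a finite-dimensional Hilbert space ℂ^{d_π} ⊗ ℂ^{m} of the form V = U_π ⊗ 1 (multiple of the irreducible π), and let R be a positive invertible operator on ℂ^{d_π} ⊗ ℂ^m commuting with V. Define χ(a) := Tr(aR). Then (χ ⊗ h)(ad_V(a)) = χ(a) for all a ∈ B(ℂ^{d_π} ⊗ ℂ^m) if and only if R = F_π ⊗ T for some T ∈ B(ℂ^m), where F_π is the canonical positive matrix of π satisfying h(q^π_{ij} q^{π*}_{kl}) = δ_{ik}F_π(j,l)/M_π. -/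

import Mathlib

/-!
Pairing the commutation relation `R V = V R` with `q_{wv}^*` under `h`, and using that `F_π` has
nonzero diagonal, forces `R = 1 ⊗ T₀`. For such `R` the orthogonality relations of the `q_{ij}`
identify `a ↦ (χ ⊗ h)(ad_V a)` with `a ↦ Tr(a R')` for `R' = (d_π / M_π) F_πᵀ ⊗ T₀`, so invariance
means `(d_π / M_π) F_πᵀ ⊗ T₀ = 1 ⊗ T₀`. This, like `1 ⊗ T₀ = F_π ⊗ T`, holds exactly when `T₀ = 0`
or `F_π` is a scalar, and `Tr F_π = M_π` pins that scalar to `M_π / d_π`.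
-/

open scoped TensorProduct ComplexOrder

noncomputable section

namespace CocycleTwist

variable (A : Type) [Ring A] [StarRing A] [Algebra ℂ A]
variable (d m : ℕ)

/-- The adjoint coaction `ad_V(a) = V (a ⊗ 1) V^*` of the corepresentation
`V(e_i ⊗ f_j) = ∑_k e_k ⊗ f_j ⊗ q_{ki}` on matrices, written entrywise:
`(ad_V a)_{(k,j),(u,t)} = ∑_{i,s} a_{(i,j),(s,t)} • (q_{ki} (q_{us})^*)`. -/
def adVmat (q : Fin d → Fin d → A) (a : Matrix (Fin d × Fin m) (Fin d × Fin m) ℂ) :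
    Matrix (Fin d × Fin m) (Fin d × Fin m) A :=
  fun x y => ∑ i : Fin d, ∑ s : Fin d,
    a (i, x.2) (s, y.2) • (q x.1 i * star (q y.1 s))

/-- The corepresentation `V` as a matrix over `A`. -/
def Vmat (q : Fin d → Fin d → A) : Matrix (Fin d × Fin m) (Fin d × Fin m) A :=
  fun x y => if x.2 = y.2 then q x.1 y.1 else 0

/-- The `R`-twisted functional `χ(a) = Tr(aR)` evaluated, after applying the Haar state `h` to
the `A`-valued entries, on a matrix over `A`. -/
def chiH (h : A →ₗ[ℂ] ℂ) (R : Matrix (Fin d × Fin m) (Fin d × Fin m) ℂ)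
    (X : Matrix (Fin d × Fin m) (Fin d × Fin m) A) : ℂ :=
  h (∑ p : Fin d × Fin m, ∑ p' : Fin d × Fin m, R p' p • X p p')

/-- `χ(a) = Tr(aR)`. -/
def chi (R : Matrix (Fin d × Fin m) (Fin d × Fin m) ℂ)
    (a : Matrix (Fin d × Fin m) (Fin d × Fin m) ℂ) : ℂ :=
  ∑ p : Fin d × Fin m, ∑ p' : Fin d × Fin m, R p' p * a p p'

open Matrix
open scoped Kronecker

section Kronecker

variable {𝕜 ι ι' κ κ' : Type*} [Field 𝕜]

theorem eq_of_kronecker_eq_kronecker {A A' : Matrix ι ι' 𝕜} {B : Matrix κ κ' 𝕜}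
    (h : A ⊗ₖ B = A' ⊗ₖ B) (hB : B ≠ 0) : A = A' := by
  obtain ⟨k, l, hkl⟩ : ∃ k l, B k l ≠ 0 := by
    by_contra! hB0
    exact hB (Matrix.ext hB0)
  ext i j
  simpa [kronecker_apply, hkl] using congrFun (congrFun h (i, k)) (j, l)

theorem exists_eq_smul_one_of_one_kronecker_eq [DecidableEq ι] {F : Matrix ι ι 𝕜}
    {T₀ T : Matrix κ κ' 𝕜}
    (h : (1 : Matrix ι ι 𝕜) ⊗ₖ T₀ = F ⊗ₖ T) (hT₀ : T₀ ≠ 0) : ∃ c : 𝕜, F = c • 1 := by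
  obtain ⟨k, l, hkl⟩ : ∃ k l, T₀ k l ≠ 0 := by
    by_contra! hT0
    exact hT₀ (Matrix.ext hT0)
  have hentry : ∀ i j, F i j * T k l = (1 : Matrix ι ι 𝕜) i j * T₀ k l := fun i j => by
    simpa [kronecker_apply] using (congrFun (congrFun h (i, k)) (j, l)).symm
  refine ⟨T₀ k l / T k l, ?_⟩
  rcases isEmpty_or_nonempty ι with _ | ⟨⟨i₀⟩⟩
  · exact Subsingleton.elim _ _
  have hT : T k l ≠ 0 := fun h0 => hkl (by simpa [h0] using (hentry i₀ i₀).symm)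
  ext i j
  rw [Matrix.smul_apply, smul_eq_mul, div_mul_eq_mul_div, eq_div_iff hT, hentry, mul_comm]

theorem smul_transpose_kronecker_eq_one_kronecker_iff [Fintype ι] [DecidableEq ι]
    {F : Matrix ι ι 𝕜} {M : 𝕜} (hM : M ≠ 0) (hF : F.trace = M) (T₀ : Matrix κ κ' 𝕜) :
    ((Fintype.card ι / M : 𝕜) • Fᵀ) ⊗ₖ T₀ = 1 ⊗ₖ T₀ ↔ ∃ T, 1 ⊗ₖ T₀ = F ⊗ₖ T := by
  rcases eq_or_ne T₀ 0 with rfl | hT₀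
  · simpa using ⟨0, (kronecker_zero F).symm⟩
  constructor
  · intro h
    have hF1 : (Fintype.card ι / M : 𝕜) • F = 1 := by
      rw [← transpose_transpose ((Fintype.card ι / M : 𝕜) • F), transpose_smul,
        eq_of_kronecker_eq_kronecker h hT₀, transpose_one]
    exact ⟨(Fintype.card ι / M : 𝕜) • T₀, by rw [kronecker_smul, ← smul_kronecker, hF1]⟩
  · rintro ⟨T, hT⟩
    obtain ⟨c, rfl⟩ := exists_eq_smul_one_of_one_kronecker_eq hT hT₀
    have hc : Fintype.card ι * c = M := by simpa [mul_comm] using hF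
    rw [transpose_smul, transpose_one, smul_smul, div_mul_eq_mul_div, hc, div_self hM, one_smul]

end Kronecker

section Corepresentation

variable {A d m} {h : A →ₗ[ℂ] ℂ} {q : Fin d → Fin d → A} {G : Matrix (Fin d) (Fin d) ℂ}

theorem apply_mul_eq_of_commute_Vmat
    (hq : ∀ i j k l, h (q i j * star (q k l)) = if i = k then G j l else 0)
    {R : Matrix (Fin d × Fin m) (Fin d × Fin m) ℂ}
    (hRV : R.map (algebraMap ℂ A) * Vmat A d m q = Vmat A d m q * R.map (algebraMap ℂ A))
    (x₁ w y₁ v : Fin d) (x₂ y₂ : Fin m) :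
    R (x₁, x₂) (w, y₂) * G y₁ v =
      if x₁ = w then ∑ z, R (z, x₂) (y₁, y₂) * G z v else 0 := by
  have E := congrArg (fun X => h (X (x₁, x₂) (y₁, y₂) * star (q w v))) hRV
  simp only [Matrix.mul_apply, Vmat, Matrix.map_apply, Finset.sum_mul, map_sum, ite_mul,
    zero_mul, mul_ite, mul_zero, mul_assoc, ← Algebra.smul_def, smul_mul_assoc, mul_smul_comm,
    map_smul, smul_eq_mul, hq, Fintype.sum_prod_type,
    Finset.sum_ite_eq', Finset.sum_ite_eq, Finset.mem_univ, if_true] at E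
  simpa using E

theorem exists_eq_one_kronecker_of_commute_Vmat (hG : ∀ i, G i i ≠ 0)
    (hq : ∀ i j k l, h (q i j * star (q k l)) = if i = k then G j l else 0)
    {R : Matrix (Fin d × Fin m) (Fin d × Fin m) ℂ}
    (hRV : R.map (algebraMap ℂ A) * Vmat A d m q = Vmat A d m q * R.map (algebraMap ℂ A)) :
    ∃ T₀ : Matrix (Fin m) (Fin m) ℂ, R = 1 ⊗ₖ T₀ := by
  rcases isEmpty_or_nonempty (Fin d) with _ | ⟨⟨i₀⟩⟩
  · exact ⟨0, Subsingleton.elim _ _⟩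
  have off_diag : ∀ i j k l, i ≠ j → R (i, k) (j, l) = 0 := fun i j k l hij => by
    simpa [hij, hG i] using apply_mul_eq_of_commute_Vmat hq hRV i j i i k l
  have diag : ∀ i j k l, R (i, k) (i, l) = R (j, k) (j, l) := fun i j k l => by
    have hrel := apply_mul_eq_of_commute_Vmat hq hRV i i j j k l
    rw [if_pos rfl, Finset.sum_eq_single j (fun z _ hz => by rw [off_diag z j k l hz, zero_mul])
      (by simp)] at hrel
    exact mul_right_cancel₀ (hG j) hrel
  refine ⟨R.submatrix (Prod.mk i₀) (Prod.mk i₀), Matrix.ext fun ⟨i, k⟩ ⟨j, l⟩ => ?_⟩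
  rcases eq_or_ne i j with rfl | hij
  · simp [diag i i₀]
  · simp [off_diag i j k l hij, hij]

theorem chiH_one_kronecker_adVmat
    (hq : ∀ i j k l, h (q i j * star (q k l)) = if i = k then G j l else 0)
    (T₀ : Matrix (Fin m) (Fin m) ℂ) (a : Matrix (Fin d × Fin m) (Fin d × Fin m) ℂ) :
    chiH A d m h (1 ⊗ₖ T₀) (adVmat A d m q a) = chi d m (((d : ℂ) • Gᵀ) ⊗ₖ T₀) a := by
  simp only [chiH, adVmat, chi, Finset.smul_sum, map_sum, map_smul, smul_smul, smul_eq_mul, hq,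
    Fintype.sum_prod_type, kronecker_apply, one_apply, Matrix.smul_apply, transpose_apply,
    mul_ite, ite_mul, mul_zero, zero_mul, one_mul]
  -- `h` kills all terms with `p'.1 ≠ p.1`; the free sum over `p.1` then yields the factor `d`
  rw [Finset.sum_congr rfl fun x _ => Finset.sum_comm]
  simp only [Finset.sum_ite_irrel, Finset.sum_const_zero, Finset.sum_ite_eq, Finset.mem_univ,
    if_true, Finset.sum_const, Finset.card_univ, Fintype.card_fin, nsmul_eq_mul, Finset.mul_sum]
  rw [Finset.sum_comm_cycle]
  refine Finset.sum_congr rfl fun i _ => Finset.sum_congr rfl fun k _ => ?_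
  rw [Finset.sum_comm]
  exact Finset.sum_congr rfl fun s _ => Finset.sum_congr rfl fun l _ => by ring

theorem forall_chi_eq_chi_iff {R R' : Matrix (Fin d × Fin m) (Fin d × Fin m) ℂ} :
    (∀ a, chi d m R a = chi d m R' a) ↔ R = R' := by
  refine ⟨fun h => Matrix.ext fun x y => ?_, fun h _ => h ▸ rfl⟩
  simpa [chi, single_apply, ite_and] using h (single y x 1)

end Corepresentation

theorem twisted_volume_preserved_iff (h : A →ₗ[ℂ] ℂ) (q : Fin d → Fin d → A)
    (F : Matrix (Fin d) (Fin d) ℂ) (Mπ : ℝ) (hMπ : 0 < Mπ)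
    (hF : F.PosDef) (hFtr : F.trace = (Mπ : ℂ) ∧ F⁻¹.trace = (Mπ : ℂ))
    (hq : ∀ i j k l : Fin d,
      h (q i j * star (q k l)) = if i = k then F j l / (Mπ : ℂ) else 0)
    (R : Matrix (Fin d × Fin m) (Fin d × Fin m) ℂ)
    (hRV : R.map (algebraMap ℂ A) * Vmat A d m q = Vmat A d m q * R.map (algebraMap ℂ A)) :
    (∀ a : Matrix (Fin d × Fin m) (Fin d × Fin m) ℂ,
      chiH A d m h R (adVmat A d m q a) = chi d m R a) ↔
    ∃ T : Matrix (Fin m) (Fin m) ℂ,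
      ∀ (i j : Fin d) (k l : Fin m), R (i, k) (j, l) = F i j * T k l := by
  have hM : (Mπ : ℂ) ≠ 0 := by exact_mod_cast hMπ.ne'
  have hqG : ∀ i j k l,
      h (q i j * star (q k l)) = if i = k then ((Mπ : ℂ)⁻¹ • F) j l else 0 := by
    simpa only [Matrix.smul_apply, smul_eq_mul, inv_mul_eq_div] using hq
  have hG : ∀ i, ((Mπ : ℂ)⁻¹ • F) i i ≠ 0 := fun i =>
    smul_ne_zero (inv_ne_zero hM) hF.diag_pos.ne'
  obtain ⟨T₀, rfl⟩ := exists_eq_one_kronecker_of_commute_Vmat hG hqG hRV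
  have hscalar : (d : ℂ) • ((Mπ : ℂ)⁻¹ • F)ᵀ = (Fintype.card (Fin d) / Mπ : ℂ) • Fᵀ := by
    rw [transpose_smul, smul_smul, Fintype.card_fin, div_eq_mul_inv]
  simp only [chiH_one_kronecker_adVmat hqG, hscalar, forall_chi_eq_chi_iff,
    smul_transpose_kronecker_eq_one_kronecker_iff hM hFtr.1]
  exact exists_congr fun T => ⟨fun hT i j k l => by rw [hT]; rfl,
    fun hT => Matrix.ext fun ⟨i, k⟩ ⟨j, l⟩ => hT i j k l⟩

end CocycleTwist
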